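/- The function U(x) = ln( c_N / (1 + |x|^(N/(N-1)))^N ), where c_N = N^N (N/(N-1))^(N-1), solves the Liouville equation -Δ_N U = e^U on ℝ^N \ {0}, and satisfies ∫_{ℝ^N} e^{U(x)} dx = c_N V_N < ∞. -/

import Mathlib

/-!
Write `p = N/(N-1)` and `D = 1 + |x|^p`. Since `U = log c - N log D` is radial, its gradient is
`-(N p / D) |x|^(p-2) x`, and because `(p-1)(N-1) = 1` the powers of `|x|` cancel in the flux:
`|∇U|^(N-2) ∇U = -(N p)^(N-1) D^(1-N) x`. The divergence of a field `g(x) x` is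
`N g + ∇g · x`, which here gives `-N (N p)^(N-1) / D^N = -c / D^N = -e^U`.

For the integral, polar coordinates give `∫ e^U = c N V_N ∫_0^∞ r^(N-1) D^(-N) dr`, and
`(r^p / (1 + r^p))^(N-1) / N` is a primitive of the radial integrand that runs from `0` to `1/N`.
-/

open MeasureTheory Filter Set Topology
open scoped RealInnerProductSpace

lemma trace_fderiv_smul_id {E : Type*} [NormedAddCommGroup E] [NormedSpace ℝ E]
    [FiniteDimensional ℝ E] {g : E → ℝ} {g' : E →L[ℝ] ℝ} {x : E} (hg : HasFDerivAt g g' x) :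
    LinearMap.trace ℝ E (fderiv ℝ (fun y => g y • y) x) = Module.finrank ℝ E * g x + g' x := by
  have hF : HasFDerivAt (fun y => g y • y) (g x • ContinuousLinearMap.id ℝ E + g'.smulRight x) x :=
    hg.smul (hasFDerivAt_id x)
  rw [hF.fderiv]
  simp [mul_comm]

lemma sum_inner_single_eq_trace {ι : Type*} [Fintype ι] [DecidableEq ι]
    (T : EuclideanSpace ℝ ι →L[ℝ] EuclideanSpace ℝ ι) :
    ∑ i, ⟪T (EuclideanSpace.single i 1), EuclideanSpace.single i 1⟫ =
      LinearMap.trace ℝ _ (T : EuclideanSpace ℝ ι →ₗ[ℝ] EuclideanSpace ℝ ι) := by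
  rw [LinearMap.trace_eq_sum_inner _ (EuclideanSpace.basisFun ι ℝ)]
  simp [real_inner_comm]

lemma Real.rpow_sub_two_mul_sq {r p : ℝ} (hr : 0 ≤ r) (hp : p ≠ 0) :
    r ^ (p - 2) * r ^ 2 = r ^ p := by
  rw [← Real.rpow_natCast, ← Real.rpow_add' hr (by simpa using hp)]
  norm_num

lemma hasGradientAt_comp_norm_rpow {F : Type*} [NormedAddCommGroup F] [InnerProductSpace ℝ F]
    [CompleteSpace F] {h : ℝ → ℝ} {h' p : ℝ} (hp : 1 < p) {x : F}
    (hh : HasDerivAt h h' (‖x‖ ^ p)) :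
    HasGradientAt (fun y => h (‖y‖ ^ p)) ((h' * (p * ‖x‖ ^ (p - 2))) • x) x := by
  rw [hasGradientAt_iff_hasFDerivAt]
  refine (hh.comp_hasFDerivAt x (hasFDerivAt_norm_rpow x hp)).congr_fderiv ?_
  ext v
  simp [smul_smul]

lemma hasDerivAt_div_one_add_pow (a : ℝ) (k : ℕ) {t : ℝ} (ht : 1 + t ≠ 0) :
    HasDerivAt (fun s => a / (1 + s) ^ k) (-(a * k) / (1 + t) ^ (k + 1)) t := by
  have hD := ((hasDerivAt_id' t).const_add 1).fun_pow k
  refine ((hasDerivAt_const t a).div hD (pow_ne_zero k ht)).congr_deriv ?_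
  rcases k with _ | k
  · simp
  · rw [Nat.add_sub_cancel]
    field_simp
    push_cast
    ring

lemma one_lt_of_mul_sub_one_eq {p : ℝ} {N : ℕ} (hN : 2 ≤ N) (hp : p * (N - 1) = N) : 1 < p := by
  have : (1 : ℝ) < N := by exact_mod_cast hN
  nlinarith

noncomputable def liouvilleBubble {F : Type*} [NormedAddCommGroup F] (c p : ℝ) (N : ℕ) (y : F) :
    ℝ :=
  Real.log (c / (1 + ‖y‖ ^ p) ^ N)

lemma hasGradientAt_liouvilleBubble {F : Type*} [NormedAddCommGroup F]
    [InnerProductSpace ℝ F] [CompleteSpace F] {c : ℝ} (hc : c ≠ 0) {p : ℝ} (hp : 1 < p) (n : ℕ)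
    (x : F) :
    HasGradientAt (liouvilleBubble c p n) ((-(n * p) / (1 + ‖x‖ ^ p) * ‖x‖ ^ (p - 2)) • x) x := by
  have hx : 1 + ‖x‖ ^ p ≠ 0 := by positivity
  have hlog : HasDerivAt (fun t => Real.log (c / (1 + t) ^ n)) (-n / (1 + ‖x‖ ^ p)) (‖x‖ ^ p) := by
    have := (hasDerivAt_div_one_add_pow c n hx).log (div_ne_zero hc (pow_ne_zero n hx))
    refine this.congr_deriv ?_
    field_simp
    ring
  rw [show -(n * p) / (1 + ‖x‖ ^ p) * ‖x‖ ^ (p - 2) = -n / (1 + ‖x‖ ^ p) * (p * ‖x‖ ^ (p - 2)) by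
    ring]
  exact hasGradientAt_comp_norm_rpow hp hlog

lemma trace_fderiv_div_one_add_norm_rpow_pow_smul {E : Type*} [NormedAddCommGroup E]
    [InnerProductSpace ℝ E] [FiniteDimensional ℝ E] (a : ℝ) {p : ℝ} (hp : 1 < p) (k : ℕ)
    (x : E) :
    LinearMap.trace ℝ E (fderiv ℝ (fun y => (a / (1 + ‖y‖ ^ p) ^ k) • y) x) =
      a * (Module.finrank ℝ E * (1 + ‖x‖ ^ p) - k * p * ‖x‖ ^ p) / (1 + ‖x‖ ^ p) ^ (k + 1) := by
  have hD : 1 + ‖x‖ ^ p ≠ 0 := by positivity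
  have hg := hasGradientAt_comp_norm_rpow hp (hasDerivAt_div_one_add_pow a k hD)
  rw [trace_fderiv_smul_id (hasGradientAt_iff_hasFDerivAt.mp hg)]
  simp only [InnerProductSpace.toDual_apply_apply, real_inner_smul_left, real_inner_self_eq_norm_sq]
  rw [mul_assoc, mul_assoc, Real.rpow_sub_two_mul_sq (norm_nonneg x) (by positivity)]
  field_simp
  ring

lemma norm_pow_smul_rpow_smul_self {F : Type*} [NormedAddCommGroup F] [NormedSpace ℝ F] {x : F}
    (hx : x ≠ 0) (a : ℝ) {p : ℝ} {k : ℕ} (hpk : (p - 1) * (k + 1) = 1) :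
    ‖(a * ‖x‖ ^ (p - 2)) • x‖ ^ k • (a * ‖x‖ ^ (p - 2)) • x = (|a| ^ k * a) • x := by
  have hr : 0 < ‖x‖ := norm_pos_iff.mpr hx
  have hexp : (‖x‖ ^ (p - 2) * ‖x‖) ^ k * ‖x‖ ^ (p - 2) = 1 := by
    rw [← Real.rpow_add_one hr.ne', ← Real.rpow_natCast, ← Real.rpow_mul hr.le,
      ← Real.rpow_add hr, show (p - 2 + 1) * k + (p - 2) = 0 by linear_combination hpk,
      Real.rpow_zero]
  rw [smul_smul, norm_smul, norm_mul, Real.norm_eq_abs, Real.norm_eq_abs,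
    abs_of_pos (Real.rpow_pos_of_pos hr _)]
  congr 1
  linear_combination (|a| ^ k * a) * hexp

lemma norm_gradient_pow_smul_gradient_liouvilleBubble {F : Type*} [NormedAddCommGroup F]
    [InnerProductSpace ℝ F] [CompleteSpace F] {c p : ℝ} {N : ℕ} (hc : c ≠ 0) (hN : 2 ≤ N)
    (hp : p * (N - 1) = N) {y : F} (hy : y ≠ 0) :
    ‖gradient (liouvilleBubble c p N) y‖ ^ (N - 2) • gradient (liouvilleBubble c p N) y =
      (-(N * p) ^ (N - 1) / (1 + ‖y‖ ^ p) ^ (N - 1)) • y := by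
  have hp1 := one_lt_of_mul_sub_one_eq hN hp
  have hD : 0 < 1 + ‖y‖ ^ p := by positivity
  have hk : (p - 1) * ((N - 2 : ℕ) + 1) = 1 := by
    rw [Nat.cast_sub hN]
    push_cast
    linear_combination hp
  rw [(hasGradientAt_liouvilleBubble hc hp1 N y).gradient,
    norm_pow_smul_rpow_smul_self hy _ hk, abs_div, abs_neg, abs_of_pos hD,
    abs_of_pos (by positivity : (0 : ℝ) < N * p)]
  congr 1
  rw [show N - 1 = N - 2 + 1 by omega]
  generalize 1 + ‖y‖ ^ p = D
  ring

lemma trace_fderiv_norm_gradient_pow_smul_gradient_liouvilleBubble {E : Type*}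
    [NormedAddCommGroup E] [InnerProductSpace ℝ E] [FiniteDimensional ℝ E] {c p : ℝ} {N : ℕ}
    (hdim : Module.finrank ℝ E = N) (hc : c ≠ 0) (hN : 2 ≤ N) (hp : p * (N - 1) = N) {x : E}
    (hx : x ≠ 0) :
    LinearMap.trace ℝ E (fderiv ℝ (fun y => ‖gradient (liouvilleBubble c p N) y‖ ^ (N - 2) •
      gradient (liouvilleBubble c p N) y) x) = -(N * (N * p) ^ (N - 1)) / (1 + ‖x‖ ^ p) ^ N := by
  have hflux : fderiv ℝ (fun y => ‖gradient (liouvilleBubble c p N) y‖ ^ (N - 2) •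
      gradient (liouvilleBubble c p N) y) x =
      fderiv ℝ (fun y => (-(N * p) ^ (N - 1) / (1 + ‖y‖ ^ p) ^ (N - 1)) • y) x :=
    Filter.EventuallyEq.fderiv_eq <| (eventually_ne_nhds hx).mono fun y hy =>
      norm_gradient_pow_smul_gradient_liouvilleBubble hc hN hp hy
  rw [hflux, trace_fderiv_div_one_add_norm_rpow_pow_smul _ (one_lt_of_mul_sub_one_eq hN hp),
    hdim, show N - 1 + 1 = N by omega, Nat.cast_sub (by omega : 1 ≤ N)]
  congr 1
  push_cast
  linear_combination ((N * p) ^ (N - 1) * ‖x‖ ^ p) * hp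

section Radial

variable {n : ℕ} {p : ℝ}

lemma hasDerivAt_rpow_div_one_add_rpow_pow (hn : 2 ≤ n) (hp : p * (n - 1) = n) {r : ℝ}
    (hr : 0 ≤ r) :
    HasDerivAt (fun s : ℝ => (s ^ p / (1 + s ^ p)) ^ (n - 1) / n)
      (r ^ (n - 1) / (1 + r ^ p) ^ n) r := by
  obtain ⟨m, rfl⟩ : ∃ m, n = m + 2 := ⟨n - 2, by omega⟩
  have hp1 := one_lt_of_mul_sub_one_eq hn hp
  have hD : 0 < 1 + r ^ p := by positivity
  have hrp : HasDerivAt (fun s => s ^ p) (p * r ^ (p - 1)) r :=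
    Real.hasDerivAt_rpow_const (Or.inr hp1.le)
  have hG := ((hrp.div (hrp.const_add 1) hD.ne').fun_pow (m + 1)).div_const ((m + 2 : ℕ) : ℝ)
  have key : r ^ (p - 1) * (r ^ p) ^ m = r ^ (m + 1) := by
    rw [← Real.rpow_mul_natCast hr, ← Real.rpow_add' hr, ← Real.rpow_natCast]
    · congr 1
      push_cast at hp ⊢
      linear_combination hp
    · push_cast at hp ⊢
      nlinarith
  refine hG.congr_deriv ?_
  rw [show m + 2 - 1 = m + 1 by omega, Nat.add_sub_cancel, ← key, Pi.div_apply]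
  push_cast at hp ⊢
  rw [div_pow]
  field_simp
  linear_combination ((r ^ p) ^ m * r ^ (p - 1) * (1 + r ^ p) ^ (m + 2)) * hp

lemma tendsto_rpow_div_one_add_rpow_atTop (hp : 0 < p) :
    Tendsto (fun s : ℝ => s ^ p / (1 + s ^ p)) atTop (𝓝 1) := by
  have h := (tendsto_atTop_add_const_left _ 1 (tendsto_rpow_atTop hp)).inv_tendsto_atTop
  have h' := (tendsto_const_nhds (x := (1 : ℝ))).sub h
  rw [sub_zero] at h'
  refine h'.congr' ((eventually_ge_atTop 0).mono fun s hs => ?_)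
  have : 0 < 1 + s ^ p := by positivity
  simp only [Pi.inv_apply]
  field_simp
  ring

lemma integrableOn_Ioi_pow_div_one_add_rpow_pow (hn : 2 ≤ n) (hp : p * (n - 1) = n) :
    IntegrableOn (fun r : ℝ => r ^ (n - 1) / (1 + r ^ p) ^ n) (Ioi 0) :=
  have hp0 : 0 < p := by linarith [one_lt_of_mul_sub_one_eq hn hp]
  integrableOn_Ioi_deriv_of_nonneg' (fun _ hr => hasDerivAt_rpow_div_one_add_rpow_pow hn hp hr)
    (fun r (hr : 0 < r) => by positivity)
    (((tendsto_rpow_div_one_add_rpow_atTop hp0).pow _).div_const _)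

lemma integral_Ioi_pow_div_one_add_rpow_pow (hn : 2 ≤ n) (hp : p * (n - 1) = n) :
    ∫ r in Ioi (0 : ℝ), r ^ (n - 1) / (1 + r ^ p) ^ n = 1 / n := by
  have hp0 : 0 < p := by linarith [one_lt_of_mul_sub_one_eq hn hp]
  rw [integral_Ioi_of_hasDerivAt_of_nonneg'
      (fun _ hr => hasDerivAt_rpow_div_one_add_rpow_pow hn hp hr)
      (fun r (hr : 0 < r) => by positivity)
      (((tendsto_rpow_div_one_add_rpow_atTop hp0).pow _).div_const _)]
  simp [Real.zero_rpow hp0.ne', zero_pow (by omega : n - 1 ≠ 0)]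

variable {E : Type*} [NormedAddCommGroup E] [NormedSpace ℝ E] [FiniteDimensional ℝ E]
  [MeasurableSpace E] [BorelSpace E] (μ : Measure E) [μ.IsAddHaarMeasure]

lemma integrable_div_one_add_norm_rpow_pow (hdim : Module.finrank ℝ E = n) (hn : 2 ≤ n)
    (hp : p * (n - 1) = n) (c : ℝ) : Integrable (fun x : E => c / (1 + ‖x‖ ^ p) ^ n) μ := by
  have : Nontrivial E := Module.nontrivial_of_finrank_pos (R := ℝ) (by omega)
  rw [integrable_fun_norm_addHaar μ (f := fun r => c / (1 + r ^ p) ^ n), hdim]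
  refine IntegrableOn.congr_fun ((integrableOn_Ioi_pow_div_one_add_rpow_pow hn hp).const_mul c)
    (fun r _ => ?_) measurableSet_Ioi
  simp only [smul_eq_mul]
  ring

lemma integral_div_one_add_norm_rpow_pow (hdim : Module.finrank ℝ E = n) (hn : 2 ≤ n)
    (hp : p * (n - 1) = n) (c : ℝ) :
    ∫ x, c / (1 + ‖x‖ ^ p) ^ n ∂μ = c * μ.real (Metric.ball 0 1) := by
  have : Nontrivial E := Module.nontrivial_of_finrank_pos (R := ℝ) (by omega)
  rw [integral_fun_norm_addHaar μ (fun r => c / (1 + r ^ p) ^ n), hdim]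
  simp_rw [smul_eq_mul, mul_div, ← mul_comm c, ← mul_div]
  rw [integral_const_mul, integral_Ioi_pow_div_one_add_rpow_pow hn hp, nsmul_eq_mul]
  field_simp

end Radial

/-- The function `U(x) = ln(c_N / (1+|x|^(N/(N-1)))^N)` with `c_N = N^N (N/(N-1))^(N-1)`
solves the Liouville equation `-Δ_N U = e^U` on `ℝ^N \ {0}` and satisfies
`∫ e^U = c_N V_N < ∞`. -/
theorem stmt11 (N : ℕ) (hN : 2 ≤ N) (c V : ℝ)
    (hc : c = (N : ℝ) ^ N * ((N : ℝ) / ((N : ℝ) - 1)) ^ (N - 1))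
    (hV : V = (volume (Metric.ball (0 : EuclideanSpace ℝ (Fin N)) 1)).toReal)
    (U : EuclideanSpace ℝ (Fin N) → ℝ)
    (hU : ∀ x, U x = Real.log (c / (1 + ‖x‖ ^ ((N : ℝ) / ((N : ℝ) - 1))) ^ N)) :
    (∀ x : EuclideanSpace ℝ (Fin N), x ≠ 0 →
      -(∑ i : Fin N,
          ⟪fderiv ℝ (fun y => ‖gradient U y‖ ^ (N - 2) • gradient U y) x
              (EuclideanSpace.single i (1 : ℝ)),
            EuclideanSpace.single i (1 : ℝ)⟫) = Real.exp (U x)) ∧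
    Integrable (fun x : EuclideanSpace ℝ (Fin N) => Real.exp (U x)) ∧
    (∫ x : EuclideanSpace ℝ (Fin N), Real.exp (U x)) = c * V := by
  set p : ℝ := (N : ℝ) / ((N : ℝ) - 1)
  have hN1 : (N : ℝ) - 1 ≠ 0 := by
    have : (2 : ℝ) ≤ N := by exact_mod_cast hN
    linarith
  have hp : p * (N - 1) = N := div_mul_cancel₀ _ hN1
  have hc' : c = N * (N * p) ^ (N - 1) := by
    rw [hc, mul_pow, ← mul_assoc, ← pow_succ', Nat.sub_add_cancel (by omega)]
  have hc0 : 0 < c := by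
    rw [hc']
    have := one_lt_of_mul_sub_one_eq hN hp
    positivity
  have hUeq : U = liouvilleBubble c p N := funext hU
  have hexpU : (fun x => Real.exp (U x)) = fun x => c / (1 + ‖x‖ ^ p) ^ N :=
    funext fun x => by rw [hU, Real.exp_log (by positivity)]
  have hdim : Module.finrank ℝ (EuclideanSpace ℝ (Fin N)) = N := finrank_euclideanSpace_fin
  refine ⟨fun x hx => ?_, ?_, ?_⟩
  · rw [sum_inner_single_eq_trace, hUeq,
      trace_fderiv_norm_gradient_pow_smul_gradient_liouvilleBubble hdim hc0.ne' hN hp hx, ← hUeq,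
      congrFun hexpU x, hc']
    ring
  · rw [hexpU]
    exact integrable_div_one_add_norm_rpow_pow volume hdim hN hp c
  · rw [hexpU, integral_div_one_add_norm_rpow_pow volume hdim hN hp c, hV]
    rfl
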